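/- arXiv:1206.5452 — 2 statements merged into one kernel-verified Lean document; each statement's English description precedes it below -/
import Mathlib

section
/- Fix θ with 0 < θ < π and an integer n ≥ 2. Let z = e^{iθ} and w = (sin θ / sin((π+(n-1)θ)/n)) · e^{i(π+(n-1)θ)/n}. Then Im z = Im w and z - w is a positive real number. -/
open Real Complex

theorem stmt_2 (θ : ℝ) (hθ : 0 < θ) (hθ' : θ < Real.pi) (n : ℕ) (hn : 2 ≤ n)
    (z w : ℂ)
    (hz : z = Complex.exp (θ * Complex.I))
    (hw : w = (Real.sin θ / Real.sin ((Real.pi + (n - 1) * θ) / n)) *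
        Complex.exp (((Real.pi + (n - 1) * θ) / n) * Complex.I)) :
    z.im = w.im ∧ ∃ l : ℝ, 0 < l ∧ z - w = (l : ℂ) := by
  have hn0 : (0:ℝ) < n := by positivity
  set φ : ℝ := (Real.pi + ((n:ℝ) - 1) * θ) / n with hφdef
  have hθφ : θ < φ := by
    rw [hφdef, lt_div_iff₀ hn0]
    nlinarith [hθ', hn0]
  have hφπ : φ < Real.pi := by
    rw [hφdef, div_lt_iff₀ hn0]
    nlinarith [mul_lt_mul_of_pos_left hθ' (show (0:ℝ) < (n:ℝ) - 1 by
      have : (2:ℝ) ≤ n := by exact_mod_cast hn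
      linarith)]
  have hsφ : 0 < Real.sin φ := Real.sin_pos_of_pos_of_lt_pi (lt_trans hθ hθφ) hφπ
  have hsφ' : Real.sin φ ≠ 0 := ne_of_gt hsφ
  have hc : (((Real.pi : ℂ) + ((n:ℂ) - 1) * θ) / n) = (φ : ℂ) := by
    rw [hφdef]; push_cast; ring
  rw [hz, hw, hc, ← Complex.ofReal_div]
  constructor
  · simp only [Complex.mul_im, Complex.exp_ofReal_mul_I_im, Complex.exp_ofReal_mul_I_re,
      Complex.ofReal_re, Complex.ofReal_im]
    field_simp
    ring
  · refine ⟨Real.sin (φ - θ) / Real.sin φ, ?_, ?_⟩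
    · have : 0 < Real.sin (φ - θ) :=
        Real.sin_pos_of_pos_of_lt_pi (by linarith) (by linarith)
      positivity
    · apply Complex.ext
      · simp only [Complex.sub_re, Complex.mul_re, Complex.exp_ofReal_mul_I_im,
          Complex.exp_ofReal_mul_I_re, Complex.ofReal_re, Complex.ofReal_im]
        rw [Real.sin_sub]
        field_simp
        ring
      · simp only [Complex.sub_im, Complex.mul_im, Complex.exp_ofReal_mul_I_im,
          Complex.exp_ofReal_mul_I_re, Complex.ofReal_re, Complex.ofReal_im]
        field_simp
        ring
end

section
/- Let f : (0,∞) → ℝ satisfy f(t) = t·f(1/t) for all t > 0, and let a > 0. Define h_a(t) = (t-a)(t-1/a) / ((f(t)-f(a))·(f♯(t) - f♯(1/a))), where f♯(t) = t/f(t). Then h_a(t) = t·h_a(1/t) for all t > 0 at which both sides are defined (i.e., f(t) ≠ f(a), f(1/t) ≠ f(a), f♯(t) ≠ f♯(1/a), f♯(1/t) ≠ f♯(1/a), and f nowhere zero on (0,∞)). -/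
theorem stmt_3 (f : ℝ → ℝ) (hfpos : ∀ t > 0, 0 < f t)
    (hfe : ∀ t > 0, f t = t * f (1 / t))
    (a : ℝ) (ha : 0 < a)
    (fs : ℝ → ℝ) (hfs : ∀ t, fs t = t / f t)
    (h : ℝ → ℝ)
    (hh : ∀ t, h t = (t - a) * (t - 1 / a) / ((f t - f a) * (fs t - fs (1 / a))))
    (t : ℝ) (ht : 0 < t)
    (h1 : f t ≠ f a) (h2 : f (1 / t) ≠ f a)
    (h3 : fs t ≠ fs (1 / a)) (h4 : fs (1 / t) ≠ fs (1 / a)) :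
    h t = t * h (1 / t) := by
  have hft : f t ≠ 0 := (hfpos t ht).ne'
  have hfa : f a ≠ 0 := (hfpos a ha).ne'
  have ht0 : t ≠ 0 := ht.ne'
  have ha0 : a ≠ 0 := ha.ne'
  have e1 : f (1 / t) = f t / t := by rw [hfe t ht]; field_simp
  have e2 : f (1 / a) = f a / a := by rw [hfe a ha]; field_simp
  have d1 : f t - f a ≠ 0 := sub_ne_zero.mpr h1
  have d2 : f (1 / t) - f a ≠ 0 := sub_ne_zero.mpr h2
  have d3 : fs t - fs (1 / a) ≠ 0 := sub_ne_zero.mpr h3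
  have d4 : fs (1 / t) - fs (1 / a) ≠ 0 := sub_ne_zero.mpr h4
  simp only [hfs, e1, e2] at d3 d4
  simp only [e1] at d2
  simp only [hh, hfs, e1, e2]
  field_simp at d2 d3 d4
  have d5 : f t - t * f a ≠ 0 := (div_ne_zero_iff.mp d2).1
  have d6 : t * f a - f t ≠ 0 := (div_ne_zero_iff.mp d3).1
  have d7 : f a - f t ≠ 0 := (div_ne_zero_iff.mp d4).1
  field_simp
  ring
end
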